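/- arXiv:1407.1249 — 7 statements merged into one kernel-verified Lean document; each statement's English description precedes it below -/
import Mathlib

section
/- The 9×12 rational matrix Mᵀ (given explicitly in the context) has rank 7. -/
/-!
Rows `q₇` and `q₈` of `Mt` are rational combinations of the other seven rows, so `Mt` factors
through a `9 × 7` matrix and has rank at most 7. Conversely, the `7 × 7` minor on the rows
`q₁, …, q₆, q₉` and the columns `w₁, …, w₇` has an explicit inverse, so the rank is at least 7.
-/

open Matrix

def Mt : Matrix (Fin 9) (Fin 12) ℚ :=
  !![-135/4, 0, -60, 15/2, -45, -15, 5/4, -45/4, 75/2, 0, 0, 0; 108/11, 18/11, 0, 0, 0, 60/11, 46/11, -90/11, 156/11, 0, 0, 0; 27/4, 0, 12, -9/2, -9, 0, 0, 0, 0, 27/4, 18, 0; 0, 0, -10, 2/3, -2, 2, 1, 0, 6, 4, -1, 0; 0, 5/2, 29, 47/3, -23, 43, 13/2, 9/2, 25, 16, -71/2, 0; 0, 5, 45, 155/6, -40, 65, 10, 0, 50, 20, -115/2, 0; 0, 3/2, 18, 23/2, -3, 30, 11/2, 9/2, 9, 6, -33, 0; 0, 0, 0, 0, 0, 6, 7,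 0, -6, 0, 0, 0; 0, 0, -6, -3, 0, 0, 0, 0, 0, 3, -6, 70]

theorem Matrix.rank_eq_card_of_eq_mul_submatrix {R m n k : Type*} [CommSemiring R]
    [StrongRankCondition R] [Fintype m] [Fintype n] [Fintype k] [DecidableEq k]
    (A : Matrix m n R) (C : Matrix m k R) (B : Matrix k k R) (r : k → m) (c : k → n)
    (hA : A = C * A.submatrix r id) (hB : A.submatrix r c * B = 1) :
    A.rank = Fintype.card k := by
  apply le_antisymm
  · calc A.rank = (C * A.submatrix r id).rank := by rw [← hA]
      _ ≤ C.rank := rank_mul_le_left _ _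
      _ ≤ Fintype.card k := rank_le_card_width C
  · calc Fintype.card k = (A.submatrix r c * B).rank := by rw [hB, rank_one]
      _ ≤ (A.submatrix r c).rank := rank_mul_le_left _ _
      _ ≤ A.rank := rank_submatrix_le A r c

def basisRows : Fin 7 → Fin 9 := ![0, 1, 2, 3, 4, 5, 8]

def pivotCols : Fin 7 → Fin 12 := ![0, 1, 2, 3, 4, 5, 6]

def rowCoeffs : Matrix (Fin 9) (Fin 7) ℚ :=
  !![1, 0, 0, 0, 0, 0, 0;
    0, 1, 0, 0, 0, 0, 0;
    0, 0, 1, 0, 0, 0, 0;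
    0, 0, 0, 1, 0, 0, 0;
    0, 0, 0, 0, 1, 0, 0;
    0, 0, 0, 0, 0, 1, 0;
    0, 1/2, -8/11, -9/11, 21/11, -9/11, 0;
    8/15, 13/6, -16/33, -39/11, 58/11, -184/55, 0;
    0, 0, 0, 0, 0, 0, 1]

def pivotInv : Matrix (Fin 7) (Fin 7) ℚ :=
  !![-32/1215, -59/1701, 1252/18711, 580/2079, -892/6237, 2584/31185, -26/189;
    -8/405, 46/567, -1352/6237, -323/693, -2194/2079, 7288/10395, 44/63;
    1/162, 25/1296, 5/1782, -91/792, 71/1188, -43/1188, -1/72;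
    -1/81, -25/648, -5/891, 91/396, -71/594, 43/594, -11/36;
    -13/2430, 517/27216, -185/3402, -89/1512, 73/2268, -253/11340, 47/1512;
    -2/135, -5/108, -2/297, 5/66, -1/99, 2/99, 1/9;
    4/45, 22/63, -4/63, -4/7, 16/21, -52/105, -2/21]

theorem Mt_eq_rowCoeffs_mul : Mt = rowCoeffs * Mt.submatrix basisRows id := by
  decide +kernel

theorem Mt_submatrix_mul_pivotInv : Mt.submatrix basisRows pivotCols * pivotInv = 1 := by
  decide +kernel

theorem stmt0 : Mt.rank = 7 := by
  simpa using Mt.rank_eq_card_of_eq_mul_submatrix rowCoeffs pivotInv basisRows pivotCols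
    Mt_eq_rowCoeffs_mul Mt_submatrix_mul_pivotInv
end

section
/- The matrix product N · M is the zero 4×9 matrix, where M is the 12×9 matrix whose transpose is given in the context and N is the given 4×12 matrix. (This expresses d₀ ∘ d₀ = 0 in the weight-10 complex of ham⁰₂.) -/
open Matrix

def M : Matrix (Fin 12) (Fin 9) ℚ := Mt.transpose

def N : Matrix (Fin 4) (Fin 12) ℚ :=
  !![0, 140, 0, 0, 0, -15, 15, 30, 5/2, 0, 0, 0; -5, -4, 1/4, -11/2, 31/12, 31/6, -3, -2, 5/3, -1, 2, 0; -16, 32, -2, -12, 22/3, 58/3, -18, -12, -5/3, 0, 8, 0; 0, 0, 0, 42, 7, 0, 0, 0, 0, 0, 14, 3]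


theorem stmt2 : N * M = 0 := by
  ext i j
  fin_cases i <;> fin_cases j <;> norm_num [N, M, Mt, Matrix.mul_apply, Fin.sum_univ_succ]
end

section
/- The vector h = (0,0,0,0,0,0,0,3,-36,-72,-3,14) ∈ ℚ¹² does NOT lie in the column space of the 12×9 matrix M (equivalently, h is not in the range of the linear map ℚ⁹ → ℚ¹² given by M). -/
open Matrix

def h : Fin 12 → ℚ := ![0, 0, 0, 0, 0, 0, 0, 3, -36, -72, -3, 14]

theorem Matrix.not_mem_range_mulVecLin_of_vecMul_eq_zero {m n R : Type*} [CommSemiring R]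
    [Fintype m] [Fintype n] {A : Matrix m n R} {y b : m → R} (hy : y ᵥ* A = 0)
    (hb : y ⬝ᵥ b ≠ 0) : b ∉ LinearMap.range A.mulVecLin := by
  rintro ⟨x, rfl⟩
  exact hb (by rw [mulVecLin_apply, dotProduct_mulVec, hy, zero_dotProduct])

def leftKernelVector : Fin 12 → ℚ := ![32, 2616, -21, 42, -25, -252, 216, 504, 0, 0, 0, 0]

theorem leftKernelVector_vecMul_M : leftKernelVector ᵥ* M = 0 := by
  ext j
  fin_cases j <;>
    norm_num [leftKernelVector, M, Mt, vecMul, dotProduct, Fin.sum_univ_succ]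

theorem leftKernelVector_dotProduct_h : leftKernelVector ⬝ᵥ h = 1512 := by
  norm_num [leftKernelVector, h, dotProduct, Fin.sum_univ_succ]

theorem stmt5 : h ∉ LinearMap.range M.mulVecLin :=
  not_mem_range_mulVecLin_of_vecMul_eq_zero leftKernelVector_vecMul_M
    (by rw [leftKernelVector_dotProduct_h]; norm_num)
end

section
/- The 4×14 rational matrix N̄ (given explicitly in the context) has rank 4, i.e. full row rank. -/
open Matrix

def Nb : Matrix (Fin 4) (Fin 14) ℚ :=
  !![0, -35, 0, 0, 0, -30, 0, -15, 25/2, 0, 0, 0, -5/2, 0; 11, -9, -39/8, -31/8, -61/2, -75, -10, -10, 85/2, -2/3, -20/3, 0, -1, -3; -16, 8, 9, 5, 52, 20, 8/3, -2, -55/3, 0, 8, 0, 1, 4; 0, 0, 63/2, 21/2, 84, 0, 0, 0, 0, 0, -14, 3, 0, 3]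

theorem Matrix.rank_eq_card_height_of_det_submatrix_ne_zero {m n R : Type*} [CommRing R]
    [IsDomain R] [Fintype m] [DecidableEq m] [Fintype n] (A : Matrix m n R) (c : m → n)
    (h : (A.submatrix id c).det ≠ 0) : A.rank = Fintype.card m :=
  le_antisymm A.rank_le_card_height (rank_of_det_ne_zero h ▸ A.rank_submatrix_le id c)

lemma Nb_submatrix_cols :
    Nb.submatrix id ![0, 1, 2, 11] =
      !![0, -35, 0, 0; 11, -9, -39/8, 0; -16, 8, 9, 0; 0, 0, 63/2, 3] := by
  ext i j
  fin_cases i <;> fin_cases j <;> rfl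

-- 2205 = 35 · 3 · (11 · 9 - 16 · 39/8), expanding along the first row and then the last column.
lemma det_Nb_submatrix_cols : (Nb.submatrix id ![0, 1, 2, 11]).det = 2205 := by
  rw [Nb_submatrix_cols]
  simp [det_succ_row_zero, Fin.sum_univ_succ, Fin.succAbove]
  norm_num

theorem stmt9 : Nb.rank = 4 :=
  Nb.rank_eq_card_height_of_det_submatrix_ne_zero ![0, 1, 2, 11]
    (by norm_num [det_Nb_submatrix_cols])
end

section
/- The vector h̄ = (0,0,0,0,0,0,-9,0,0,105,3,14,0,0) ∈ ℚ¹⁴ does NOT lie in the column space of the 14-row matrix M̄ whose transpose is given in the context (equivalently, h̄ is not in the range of the linear map ℚ¹⁸ → ℚ¹⁴ given by M̄). (This is the key step proving the Kotschick–Morita theorem: ω ∧ h represents a nontrivial class in H⁷(ham₂)₈.) -/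
/-! A linear functional vanishing on the column space of `Mb` but not at `hb` rules `hb` out of it:
solving `Mbᵀ y = 0` over ℚ gives such a `y`, with `y ⬝ᵥ hb = 3024`. -/

open Matrix

def Mbt : Matrix (Fin 18) (Fin 14) ℚ :=
  !![135/4, 0, -20, -60, 15, 5/4, -135/4, -15, -15, 0, 0, 0, 0, 0; -18, -12, 0, 0, 0, 23/3, -45, 21, 10, 0, 0, 0, 0, 0; -27/4, 0, -20, 12, 3, 0, 0, 0, 0, 63/8, -18, 0, 0, 0; 0, 0, 2, -10, 2/3, 1, 2, -1/3, 2, -7, 1, 0, 0, 0; 0, -11/2, -17, 9, 71/12, 7/8, 51/8, 233/12, 10, -49/4, 4, 0, 0, 0; 0, -1/3, -9, 5, 49/18, 5/12, 55/4, 47/9, 19/3, -28/3, -1/6, 0, 0, 0; 0, -5/2, -20, 0, 65/12, -15/8, -75/8, 65/12, -5, 35/4, -25/2, 0, 0, 0; 0, 0, 0, 0, 0, 7, -18, -9, 6, 0, 0, 0, 0, 0; 0, 0, -2, -6, 0, 0, 0, 0, 0, -21/2, 6, 70, 0, 0; -1/2, 2, -2, 14/3, 1/3, 0, 0, 0, 0,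 0, 0, 0, -28, -14/3; -5/2, 2, 0, 16/3, -1/3, 0, 0, 0, 0, 0, 0, 0, -28, -28/3; 0, 8, 0, 0, 0, -3, 0, 1, -6, 0, 0, 0, -112, 0; 0, 0, 0, 0, 0, -1, 15, -6, 0, -3/2, -3, 0, 48, -14; 0, 0, 0, 0, 0, -2/3, -1, -1, -2, 5/2, -1, 0, 4, -14/3; 0, 0, 0, 0, 4/3, 11/3, -45, 46/3, 0, 5/2, 11, 0, -136, 14; 0, 0, 2, 0, -1, -3/2, 123/8, -4, 0, -21/16, -33/16, 0, 42, -21/8; 0, 0, 0, 2, -1/3, -1/2, 39/8, -4/3, 0, 7/16, -13/16, 0, 14, -35/24; 0, 0, 0, 0, 0, 0, 0, 0, 0, 1, -1, -20/3, 0, 2]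

def Mb : Matrix (Fin 14) (Fin 18) ℚ := Mbt.transpose

def hb : Fin 14 → ℚ := ![0, 0, 0, 0, 0, 0, -9, 0, 0, 105, 3, 14, 0, 0]

theorem Matrix.notMem_range_mulVecLin_of_vecMul_eq_zero {m n R : Type*} [Fintype m] [Fintype n]
    [CommSemiring R] {A : Matrix m n R} {b y : m → R} (hyA : y ᵥ* A = 0) (hyb : y ⬝ᵥ b ≠ 0) :
    b ∉ LinearMap.range A.mulVecLin := by
  rintro ⟨x, rfl⟩
  apply hyb
  rw [mulVecLin_apply, dotProduct_mulVec, hyA, zero_dotProduct]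

def cokernelWitness : Fin 14 → ℚ := ![-64, 36, 63, -21, 360, -2448, -336, -432, 1200, 0, 0, 0, 0, 0]

theorem cokernelWitness_vecMul_Mb : cokernelWitness ᵥ* Mb = 0 := by
  ext j
  fin_cases j <;> norm_num [cokernelWitness, Mb, Mbt, vecMul, dotProduct, Fin.sum_univ_succ]

theorem cokernelWitness_dotProduct_hb : cokernelWitness ⬝ᵥ hb = 3024 := by
  norm_num [cokernelWitness, hb, dotProduct, Fin.sum_univ_succ]

theorem stmt13 : hb ∉ LinearMap.range Mb.mulVecLin :=
  notMem_range_mulVecLin_of_vecMul_eq_zero cokernelWitness_vecMul_Mb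
    (by rw [cokernelWitness_dotProduct_hb]; norm_num)
end

section
/- With M̄, N̄, h̄ as in the context, the kernel of the linear map given by N̄ is the internal direct sum of the range of the linear map given by M̄ and the line spanned by h̄: ker(N̄) = range(M̄) ⊕ ℚ·h̄. (Equivalently, the cohomology H⁷(ham₂)₈ = ker d / im d is one-dimensional, spanned by the class of h̄ = ω ∧ h; this proves the Kontsevich homomorphism ω∧ : H⁵(ham⁰₂)₁₀ → H⁷(ham₂)₈ is an isomorphism.) -/
open Matrix

/- A certificate found by exact linear algebra over ℚ. The identity
`Mb * Sb + Kb * Nb + vecMulVec hb cb = 1` writes every `x` as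
`Mb (Sb x) + Kb (Nb x) + (cb ⬝ᵥ x) • hb`, so `ker Nb ≤ range Mb + ℚ ∙ hb`; and `cb` vanishes
on `range Mb` while `cb ⬝ᵥ hb = 1`, so the sum is direct. -/

def Sb : Matrix (Fin 18) (Fin 14) ℚ :=
  !![0, 0, 0, 0, 91/1215, -11/21, -34/405, -401/3402, 3077/11340, -184/25515, 34/3645, -16/8505, 13/4860, -13/1215; 0, 0, 0, 0, 4553/79380, -7267/6860, -2341/13230, -253901/1111320, 88265/148176, -6218/416745, 361/119070, -347/138915, 4553/2222640, -4553/555660; 0, 0, 0, 0, -4451/59535, 20327/15435, 3974/19845, 232667/833490, -77207/111132, 22304/1250235, -10754/178605, 3266/416745, -4451/1666980, 4451/416745; 0, 0, 0, 0, -16313/26460, 70801/6860, 6751/4410, 733121/370440, -255845/49392, 17978/138915, -1831/39690, 1082/46305, -16313/740880, 16313/185220; 0, 0, 0, 0, -9362/59535, 45034/15435, 9008/19845, 280807/416745, -89419/55566, 47888/1250235, -1688/178605, 2732/416745, -4681/833490, 9362/416745; 0, 0, 0, 0, 1502/2835, -5464/735, -1058/945, -31897/19845, 10681/2646, -5648/59535,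 398/8505, -362/19845, 751/39690, -1502/19845; 0, 0, 0, 0, 0, 0, 0, 0, 0, 0, 0, 0, 0, 0; 0, 0, 0, 0, 0, 0, 0, 0, 0, 0, 0, 0, 0, 0; 0, 0, 0, 0, 1/756, -31/588, -1/126, -97/10584, 169/7056, -10/3969, -1/1134, 37/2646, 1/21168, -1/5292; 0, 0, 0, 0, 0, 0, 0, 0, 0, 0, 0, 0, -1/14, 3/14; 0, 0, 0, 0, 0, 0, 0, 0, 0, 0, 0, 0, 1/28, -3/14; 0, 0, 0, 0, 0, 0, 0, 0, 0, 0, 0, 0, 0, 0; 0, 0, 0, 0, 0, 0, 0, 0, 0, 0, 0, 0, 0, 0; 0, 0, 0, 0, 0, 0, 0, 0, 0, 0, 0, 0, 0, 0; 0, 0, 0, 0, 0, 0, 0, 0, 0, 0, 0, 0, 0, 0; 0, 0, 0, 0, 0, 0, 0, 0, 0, 0, 0, 0, 0, 0; 0, 0, 0, 0, 0, 0, 0, 0, 0, 0, 0, 0, 0, 0; 0, 0, 0, 0, 0, 0, 0, 0, 0, 0, 0, 0, 0, 0]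

def Kb : Matrix (Fin 14) (Fin 4) ℚ :=
  !![0, -1/7, -9/56, 1/42; -1/35, 0, 0, 0; -4/105, 8/21, 11/42, 1/63; 4/35, -8/7, -11/14, 1/21; 0, 0, 0, 0; 0, 0, 0, 0; 0, 0, 0, 0; 0, 0, 0, 0; 0, 0, 0, 0; 0, 0, 0, 0; 0, 0, 0, 0; 0, 0, 0, 0; 0, 0, 0, 0; 0, 0, 0, 0]

def cb : Fin 14 → ℚ := ![0, 0, 0, 0, -5/756, 155/588, 5/126, 485/10584, -845/7056, 50/3969, 5/1134, 2/1323, -5/21168, 5/5292]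

namespace Matrix

variable {R m n p : Type*} [CommRing R] [Fintype m] [Fintype n]

theorem ker_mulVecLin_eq_range_sup_span_singleton [Fintype p] [DecidableEq n]
    {M : Matrix n m R} {N : Matrix p n R} {h : n → R} {S : Matrix m n R} {K : Matrix n p R}
    {c : n → R} (hNM : N * M = 0) (hNh : N *ᵥ h = 0)
    (hom : M * S + K * N + vecMulVec h c = 1) :
    LinearMap.ker N.mulVecLin = LinearMap.range M.mulVecLin ⊔ Submodule.span R {h} := by
  refine le_antisymm (fun x hx => ?_) (sup_le ?_ ?_)
  · have hx : N *ᵥ x = 0 := hx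
    have decomp : M *ᵥ (S *ᵥ x) + (c ⬝ᵥ x) • h = x := by
      simpa [add_mulVec, ← mulVec_mulVec, hx, vecMulVec_mulVec] using congr_arg (· *ᵥ x) hom
    rw [← decomp]
    exact Submodule.add_mem_sup ⟨S *ᵥ x, rfl⟩
      (Submodule.smul_mem _ _ (Submodule.mem_span_singleton_self h))
  · rw [LinearMap.range_le_ker_iff, ← mulVecLin_mul, hNM, mulVecLin_zero]
  · exact (Submodule.span_singleton_le_iff_mem _ _).mpr hNh

theorem range_mulVecLin_inf_span_singleton_eq_bot {M : Matrix n m R} {h c : n → R}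
    (hcM : c ᵥ* M = 0) (hch : c ⬝ᵥ h = 1) :
    LinearMap.range M.mulVecLin ⊓ Submodule.span R {h} = ⊥ := by
  rw [eq_bot_iff]
  rintro x ⟨⟨y, rfl⟩, hx⟩
  obtain ⟨t, ht⟩ := Submodule.mem_span_singleton.mp hx
  have ht0 : t = 0 := by
    calc t = c ⬝ᵥ (t • h) := by rw [dotProduct_smul, hch, smul_eq_mul, mul_one]
      _ = c ᵥ* M ⬝ᵥ y := by rw [ht, mulVecLin_apply, dotProduct_mulVec]
      _ = 0 := by rw [hcM, zero_dotProduct]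
  rw [Submodule.mem_bot, ← ht, ht0, zero_smul]

end Matrix

theorem stmt14 :
    LinearMap.ker Nb.mulVecLin = LinearMap.range Mb.mulVecLin ⊔ Submodule.span ℚ {hb} ∧
    LinearMap.range Mb.mulVecLin ⊓ Submodule.span ℚ {hb} = ⊥ := by
  have hNM : Nb * Mb = 0 := by decide +kernel
  have hNh : Nb *ᵥ hb = 0 := by decide +kernel
  have hom : Mb * Sb + Kb * Nb + vecMulVec hb cb = 1 := by decide +kernel
  have hcM : cb ᵥ* Mb = 0 := by decide +kernel
  have hch : cb ⬝ᵥ hb = 1 := by decide +kernel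
  exact ⟨ker_mulVecLin_eq_range_sup_span_singleton hNM hNh hom,
    range_mulVecLin_inf_span_singleton_eq_bot hcM hch⟩
end

section
/- For every vector v ∈ ℚ¹² with N.mulVec v = 0, there exist u ∈ ℚ⁹ and c ∈ ℚ such that v = M.mulVec u + c • h, where M, N, h are as in the context. (Every weight-10 5-cocycle of ham⁰₂ is cohomologous to a multiple of h = 3w₈ − 36w₉ − 72w₁₀ − 3w₁₁ + 14w₁₂.) -/
open Matrix

/-! The identity of `ℚ¹²` splits as `1 = M s₅ + h ⊗ q + s₆ N` for explicit rational matrices `s₅`, `s₆`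
and a row vector `q`: it is homotopic to the rank-one map `v ↦ (q ⬝ᵥ v) h`. Applied to a cocycle `v`,
i.e. `N v = 0`, this gives `v = M (s₅ v) + (q ⬝ᵥ v) h`. The splitting is a finite computation over `ℚ`. -/

theorem Matrix.eq_mulVec_add_smul_of_mul_add_vecMulVec_add_mul_eq_one
    {R m n k : Type*} [CommRing R] [Fintype m] [DecidableEq m] [Fintype n] [Fintype k]
    {A : Matrix m n R} {B : Matrix n m R} {x y : m → R} {C : Matrix m k R} {D : Matrix k m R}
    (hABCD : A * B + vecMulVec x y + C * D = 1) {v : m → R} (hv : D *ᵥ v = 0) :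
    v = A *ᵥ (B *ᵥ v) + (y ⬝ᵥ v) • x := by
  calc v = (A * B + vecMulVec x y + C * D) *ᵥ v := by rw [hABCD, one_mulVec]
    _ = A *ᵥ (B *ᵥ v) + (y ⬝ᵥ v) • x := by
      rw [add_mulVec, add_mulVec, ← mulVec_mulVec, ← mulVec_mulVec, hv, mulVec_zero, add_zero,
        vecMulVec_mulVec, op_smul_eq_smul]

/- Coordinates `4, …, 11` are free on `ker N`, since columns `0, …, 3` of `N` form an invertible
block; `homotopy5` and `hCoeff` solve `v = M u + c h` in terms of the free coordinates, and
`homotopy6` is the inverse of that block, padded with zeros. -/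

def homotopy5 : Matrix (Fin 9) (Fin 12) ℚ :=
  !![0, 0, 0, 0, -91/3645, -293/10206, 463/5670, -137/8505,
      -2279/102060, 92/8505, -422/25515, -16/8505;
    0, 0, 0, 0, -431/40824, -13043/571536, 17501/63504, -9979/95256,
    -71341/1143072, 643/23814, -2201/142884, -59/23814;
    0, 0, 0, 0, -601/56133, 39407/785862, -823/7938, -293/130977,
    15709/1571724, -832/130977, 20662/392931, 626/130977;
    0, 0, 0, 0, 4127/24948, 5651/349272, -667/3528, 34003/58212,
    270001/698544, -2491/14553, 12827/87318, 290/14553;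
    0, 0, 0, 0, -3109/37422, -60715/523908, 3707/5292, -2339/87318,
    -185921/1047816, 3874/43659, -9799/130977, -446/43659;
    0, 0, 0, 0, 8419/187110, 45497/523908, -12221/26460, 421/87318,
    553103/5239080, -11614/218295, 27799/654885, 1292/218295;
    0, 0, 0, 0, 0, 0, 0, 0, 0, 0, 0, 0;
    0, 0, 0, 0, 0, 0, 0, 0, 0, 0, 0, 0;
    0, 0, 0, 0, -1/2268, -25/31752, -5/3528, -29/5292, -155/63504, 5/1323, -13/7938, 37/2646]

def hCoeff : Fin 12 → ℚ :=
  ![0, 0, 0, 0, 5/2268, 125/31752, 25/3528, 145/5292, 775/63504, -25/1323, 65/7938, 2/1323]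

def homotopy6 : Matrix (Fin 12) (Fin 4) ℚ :=
  !![0, -1/7, -1/56, -1/42;
    1/140, 0, 0, 0;
    4/35, 8/7, -5/14, 1/21;
    0, 0, 0, 1/42;
    0, 0, 0, 0;
    0, 0, 0, 0;
    0, 0, 0, 0;
    0, 0, 0, 0;
    0, 0, 0, 0;
    0, 0, 0, 0;
    0, 0, 0, 0;
    0, 0, 0, 0]

theorem M_mul_homotopy5_add_vecMulVec_add_homotopy6_mul_N :
    M * homotopy5 + vecMulVec h hCoeff + homotopy6 * N = 1 := by
  decide +kernel

theorem stmt16 :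
    ∀ v : Fin 12 → ℚ, N.mulVec v = 0 →
      ∃ (u : Fin 9 → ℚ) (c : ℚ), v = M.mulVec u + c • h := by
  intro v hv
  exact ⟨_, _, eq_mulVec_add_smul_of_mul_add_vecMulVec_add_mul_eq_one
    M_mul_homotopy5_add_vecMulVec_add_homotopy6_mul_N hv⟩
end
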